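/- Let Σ be a finite alphabet with at least two elements and let θ be a primitive substitution on Σ. Let X_θ⁺ = {x ∈ Σ^ℕ : every factor of x belongs to F[θ]} be the associated one-sided substitution subshift. Then the Hausdorff dimension of X_θ⁺ with respect to the PiNat metric equals 0. -/

import Mathlib

/-!
Let `k` witness primitivity. Since every letter occurs in each `θ^k(b)` and there are at least
two letters, `|θ^k(b)| ≥ 2`, hence `|θ^{jk}(b)| ≥ 2^j`. So a factor of length `n` of some
`θ^M(a)` already lies in a two-block word `θ^j(b) θ^j(c)` with `j ≤ k ⌈log₂ n⌉`, and is determined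
by `b`, `c`, `j` and an offset below `2 L^j`, where `L` bounds the `|θ(a)|`: the language has
polynomially many words of length `n`. The subshift is therefore covered by polynomially many
cylinders of diameter `2^{-n}`, and its `d`-dimensional Hausdorff measure vanishes for all `d > 0`.
-/

open MeasureTheory Filter

variable {A : Type*} [Fintype A]

/-- Give the finite alphabet the discrete topology. -/
instance : TopologicalSpace A := ⊥

instance : DiscreteTopology A := ⟨rfl⟩

/-- The PiNat metric on the sequence space `A^ℕ`:
`dist x y = (1/2)^(firstDiff x y)` for `x ≠ y`. -/
noncomputable instance : MetricSpace (ℕ → A) := PiNat.metricSpace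

instance : MeasurableSpace (ℕ → A) := borel _

instance : BorelSpace (ℕ → A) := ⟨rfl⟩

/-- The extension of a substitution `θ` to finite words, by concatenation. -/
def substWord {α : Type*} (θ : α → List α) : List α → List α :=
  fun w => w.foldr (fun a acc => θ a ++ acc) []

/-- `θ` is a substitution: every letter maps to a nonempty word. -/
def IsSubstitution {α : Type*} (θ : α → List α) : Prop := ∀ a, θ a ≠ []

/-- `θ` is primitive: there is `k ≥ 1` such that for all letters `a, b`,
the letter `b` occurs in `θ^k(a)`. -/
def IsPrimitiveSubst {α : Type*} (θ : α → List α) : Prop :=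
  ∃ k, 1 ≤ k ∧ ∀ a b : α, b ∈ (substWord θ)^[k] [a]

/-- The language `F[θ]` of all nonempty factors of the words `θ^m(a)`, `m ≥ 1`. -/
def substLang {α : Type*} (θ : α → List α) : Set (List α) :=
  {w | w ≠ [] ∧ ∃ m, 1 ≤ m ∧ ∃ a : α, w <:+: (substWord θ)^[m] [a]}

open Topology
open scoped ENNReal

theorem two_pow_clog_two_le {n : ℕ} (hn : 1 ≤ n) : 2 ^ Nat.clog 2 n ≤ 2 * n := by
  rcases hn.eq_or_lt with rfl | hn
  · simp
  · calc 2 ^ Nat.clog 2 n = 2 * 2 ^ (Nat.clog 2 n).pred := by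
          rw [← pow_succ', Nat.pred_eq_sub_one, Nat.sub_add_cancel (Nat.clog_pos one_lt_two hn)]
      _ ≤ 2 * n := by have := Nat.pow_pred_clog_lt_self one_lt_two hn; omega

theorem pow_clog_two_le (a : ℕ) {n : ℕ} (hn : 1 ≤ n) :
    a ^ Nat.clog 2 n ≤ (2 * n) ^ Nat.clog 2 a :=
  calc a ^ Nat.clog 2 n ≤ (2 ^ Nat.clog 2 a) ^ Nat.clog 2 n :=
        Nat.pow_le_pow_left (Nat.le_pow_clog one_lt_two a) _
    _ = (2 ^ Nat.clog 2 n) ^ Nat.clog 2 a := by rw [← pow_mul, ← pow_mul, mul_comm]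
    _ ≤ (2 * n) ^ Nat.clog 2 a := Nat.pow_le_pow_left (two_pow_clog_two_le hn) _

theorem List.IsInfix.infix_append_take_or_infix {α : Type*} {w B R : List α}
    (h : w <:+: B ++ R) :
    w <:+: B ++ R.take w.length ∨ w <:+: R := by
  obtain ⟨s, t, hst⟩ := h
  by_cases hs : B.length ≤ s.length
  · right
    obtain ⟨s', rfl⟩ : B <+: s :=
      List.prefix_of_prefix_length_le (List.prefix_append B R)
        ⟨w ++ t, by simpa [List.append_assoc] using hst⟩ hs
    exact ⟨s', t, List.append_cancel_left (as := B) (by simpa [List.append_assoc] using hst)⟩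
  · left
    have hlen : s.length + w.length + t.length = B.length + R.length := by
      simpa [List.length_append, Nat.add_assoc] using congrArg List.length hst
    obtain ⟨t', ht'⟩ := List.prefix_of_prefix_length_le
      (⟨t, by simpa [List.append_assoc] using hst⟩ : s ++ w <+: B ++ R)
      (⟨R.drop w.length, by simp⟩ : B ++ R.take w.length <+: B ++ R)
      (by simp only [List.length_append, List.length_take]; omega)
    exact ⟨s, t', by simpa [List.append_assoc] using ht'⟩

section SubstWord

variable {α : Type*} (θ : α → List α)

@[simp]
theorem substWord_nil : substWord θ [] = [] := rfl

@[simp]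
theorem substWord_cons (a : α) (u : List α) :
    substWord θ (a :: u) = θ a ++ substWord θ u := rfl

@[simp]
theorem substWord_append (u v : List α) :
    substWord θ (u ++ v) = substWord θ u ++ substWord θ v := by
  induction u with
  | nil => rfl
  | cons a u ih => simp [ih]

@[simp]
theorem substWord_iterate_nil (m : ℕ) : (substWord θ)^[m] [] = [] :=
  Function.iterate_fixed (substWord_nil θ) m

theorem substWord_iterate_append (m : ℕ) (u v : List α) :
    (substWord θ)^[m] (u ++ v) = (substWord θ)^[m] u ++ (substWord θ)^[m] v := by
  induction m generalizing u v with
  | zero => rfl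
  | succ m ih => simp only [Function.iterate_succ_apply, substWord_append, ih]

theorem substWord_iterate_cons (m : ℕ) (a : α) (u : List α) :
    (substWord θ)^[m] (a :: u) = (substWord θ)^[m] [a] ++ (substWord θ)^[m] u :=
  substWord_iterate_append θ m [a] u

theorem length_substWord_le {L : ℕ} (hL : ∀ a, (θ a).length ≤ L) (u : List α) :
    (substWord θ u).length ≤ L * u.length := by
  induction u with
  | nil => simp
  | cons a u ih =>
      simp only [substWord_cons, List.length_append, List.length_cons, Nat.mul_succ]
      linarith [hL a]

theorem length_substWord_iterate_le {L : ℕ} (hL : ∀ a, (θ a).length ≤ L) (m : ℕ)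
    (u : List α) : ((substWord θ)^[m] u).length ≤ L ^ m * u.length := by
  induction m generalizing u with
  | zero => simp
  | succ m ih =>
      calc ((substWord θ)^[m] (substWord θ u)).length
          ≤ L ^ m * (substWord θ u).length := ih _
        _ ≤ L ^ m * (L * u.length) := Nat.mul_le_mul_left _ (length_substWord_le θ hL u)
        _ = L ^ (m + 1) * u.length := by ring

theorem mul_length_le_length_substWord_iterate {m c : ℕ}
    (hc : ∀ b, c ≤ ((substWord θ)^[m] [b]).length) (u : List α) :
    c * u.length ≤ ((substWord θ)^[m] u).length := by
  induction u with
  | nil => simp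
  | cons a u ih =>
      rw [substWord_iterate_cons, List.length_append, List.length_cons, Nat.mul_succ]
      linarith [hc a]

theorem pow_le_length_substWord_iterate_mul {k c : ℕ}
    (hc : ∀ b, c ≤ ((substWord θ)^[k] [b]).length) (j : ℕ) (b : α) :
    c ^ j ≤ ((substWord θ)^[j * k] [b]).length := by
  induction j generalizing b with
  | zero => simp
  | succ j ih =>
      rw [Nat.succ_mul, Function.iterate_add_apply]
      calc c ^ (j + 1) = c ^ j * c := pow_succ c j
        _ ≤ c ^ j * ((substWord θ)^[k] [b]).length := Nat.mul_le_mul_left _ (hc b)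
        _ ≤ _ := mul_length_le_length_substWord_iterate θ ih _

theorem card_le_length_substWord_iterate [Fintype α] {k : ℕ}
    (hk : ∀ a b : α, b ∈ (substWord θ)^[k] [a]) (a : α) :
    Fintype.card α ≤ ((substWord θ)^[k] [a]).length := by
  classical
  calc Fintype.card α = (Finset.univ : Finset α).card := rfl
    _ ≤ ((substWord θ)^[k] [a]).toFinset.card :=
        Finset.card_le_card fun b _ => List.mem_toFinset.2 (hk a b)
    _ ≤ _ := List.toFinset_card_le _

theorem exists_infix_append_of_infix_substWord_iterate {m : ℕ} {w : List α}
    (hblock : ∀ b, w.length ≤ ((substWord θ)^[m] [b]).length) (hw : w ≠ []) {u : List α}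
    (h : w <:+: (substWord θ)^[m] u) :
    ∃ b c, w <:+: (substWord θ)^[m] [b] ++ (substWord θ)^[m] [c] := by
  induction u with
  | nil => exact absurd (List.eq_nil_of_infix_nil (by simpa using h)) hw
  | cons a u ih =>
      rw [substWord_iterate_cons] at h
      rcases h.infix_append_take_or_infix with h | h
      · cases u with
        | nil =>
            rw [substWord_iterate_nil, List.take_nil, List.append_nil] at h
            exact ⟨a, a, h.trans (List.prefix_append _ _).isInfix⟩
        | cons c u =>
            rw [substWord_iterate_cons θ m c u, List.take_append_of_le_length (hblock c)] at h
            exact ⟨a, c,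
              h.trans ((List.prefix_append_right_inj _).2 (List.take_prefix _ _)).isInfix⟩
      · exact ih h

end SubstWord

section Complexity

variable {α : Type*} (θ : α → List α)

theorem exists_infix_append_of_mem_substLang {m : ℕ} {w : List α}
    (hblock : ∀ b, w.length ≤ ((substWord θ)^[m] [b]).length) (hw : w ∈ substLang θ) :
    ∃ b c, ∃ j ≤ m, w <:+: (substWord θ)^[j] [b] ++ (substWord θ)^[j] [c] := by
  obtain ⟨hne, M, -, a, h⟩ := hw
  rcases le_or_gt M m with hM | hM
  · exact ⟨a, a, M, hM, h.trans (List.prefix_append _ _).isInfix⟩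
  · rw [← Nat.add_sub_cancel' hM.le, Function.iterate_add_apply] at h
    obtain ⟨b, c, h⟩ := exists_infix_append_of_infix_substWord_iterate θ hblock hne h
    exact ⟨b, c, m, le_rfl, h⟩

theorem ncard_substLang_length_le [Fintype α] {m n N : ℕ}
    (hblock : ∀ b, n ≤ ((substWord θ)^[m] [b]).length)
    (hlen : ∀ j ≤ m, ∀ b, ((substWord θ)^[j] [b]).length ≤ N) :
    {w ∈ substLang θ | w.length = n}.ncard ≤ Fintype.card α ^ 2 * ((m + 1) * (2 * N)) := by
  let f : α × α × Fin (m + 1) × Fin (2 * N) → List α := fun ⟨b, c, j, i⟩ =>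
    (((substWord θ)^[j] [b] ++ (substWord θ)^[j] [c]).drop i).take n
  have hsub : {w ∈ substLang θ | w.length = n} ⊆ Set.range f := by
    rintro w ⟨hw, rfl⟩
    obtain ⟨b, c, j, hj, s, t, hst⟩ := exists_infix_append_of_mem_substLang θ hblock hw
    have hs : s.length < 2 * N := by
      have := congrArg List.length hst
      simp only [List.length_append] at this
      linarith [hlen j hj b, hlen j hj c, List.length_pos_iff.2 hw.1]
    refine ⟨⟨b, c, ⟨j, Nat.lt_succ_of_le hj⟩, ⟨s.length, hs⟩⟩, ?_⟩
    simp only [f, ← hst, List.append_assoc, List.drop_left, List.take_left]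
  calc {w ∈ substLang θ | w.length = n}.ncard ≤ (Set.range f).ncard :=
        Set.ncard_le_ncard hsub (Set.finite_range f)
    _ ≤ Nat.card (α × α × Fin (m + 1) × Fin (2 * N)) := by
        rw [← Nat.card_coe_set_eq]; exact Finite.card_range_le f
    _ = Fintype.card α ^ 2 * ((m + 1) * (2 * N)) := by
        simp only [Nat.card_eq_fintype_card, Fintype.card_prod, Fintype.card_fin]; ring

end Complexity

theorem exists_ncard_substLang_length_le_pow {α : Type*} [Fintype α] {θ : α → List α}
    (hα : 2 ≤ Fintype.card α) (hprim : IsPrimitiveSubst θ) :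
    ∃ C p : ℕ, ∀ n, 1 ≤ n → {w ∈ substLang θ | w.length = n}.ncard ≤ C * n ^ p := by
  obtain ⟨k, -, hk⟩ := hprim
  obtain ⟨L, hL1, hL⟩ : ∃ L, 1 ≤ L ∧ ∀ a, (θ a).length ≤ L :=
    ⟨∑ a, (θ a).length + 1, Nat.le_add_left 1 _, fun a =>
      (Finset.single_le_sum (f := fun a => (θ a).length) (fun _ _ => Nat.zero_le _)
        (Finset.mem_univ a)).trans (Nat.le_succ _)⟩
  set β := Nat.clog 2 (L ^ k)
  refine ⟨Fintype.card α ^ 2 * ((k + 1) * 2 ^ (β + 1)), β + 1, fun n hn => ?_⟩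
  set m := Nat.clog 2 n * k
  have hgrowth : ∀ b, 2 ≤ ((substWord θ)^[k] [b]).length := fun b =>
    hα.trans (card_le_length_substWord_iterate θ hk b)
  have hblock : ∀ b, n ≤ ((substWord θ)^[m] [b]).length := fun b =>
    (Nat.le_pow_clog one_lt_two n).trans (pow_le_length_substWord_iterate_mul θ hgrowth _ b)
  have hlen : ∀ j ≤ m, ∀ b, ((substWord θ)^[j] [b]).length ≤ (2 * n) ^ β := fun j hj b =>
    calc ((substWord θ)^[j] [b]).length ≤ L ^ j := by
          simpa using length_substWord_iterate_le θ hL j [b]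
      _ ≤ L ^ m := Nat.pow_le_pow_right hL1 hj
      _ = (L ^ k) ^ Nat.clog 2 n := by rw [← pow_mul, mul_comm]
      _ ≤ (2 * n) ^ β := pow_clog_two_le _ hn
  have hm : m + 1 ≤ (k + 1) * n := by
    have : Nat.clog 2 n ≤ n := Nat.clog_le_of_le_pow Nat.lt_two_pow_self.le
    simp only [m]
    nlinarith
  calc {w ∈ substLang θ | w.length = n}.ncard
      ≤ Fintype.card α ^ 2 * ((m + 1) * (2 * (2 * n) ^ β)) :=
        ncard_substLang_length_le θ hblock hlen
    _ ≤ Fintype.card α ^ 2 * (((k + 1) * n) * (2 * (2 * n) ^ β)) := by gcongr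
    _ = Fintype.card α ^ 2 * ((k + 1) * 2 ^ (β + 1)) * n ^ (β + 1) := by ring

section Dimension

/- The instance `TopologicalSpace A := ⊥` above is declared for every type, so the usual
topologies on `ℝ` and `ℝ≥0∞` have to be restored. -/
local instance : TopologicalSpace ℝ := UniformSpace.toTopologicalSpace
local instance : TopologicalSpace ℝ≥0∞ := ENNReal.instTopologicalSpace

def prefixWords {α : Type*} (s : Set (ℕ → α)) (n : ℕ) : Set (List α) :=
  (fun x => (List.range n).map x) '' s

theorem finite_prefixWords {α : Type*} [Finite α] (s : Set (ℕ → α)) (n : ℕ) :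
    (prefixWords s n).Finite :=
  (List.finite_length_eq α n).subset (by rintro _ ⟨x, -, rfl⟩; simp)

theorem ediam_setOf_map_range_eq_le {α : Type*} (n : ℕ) (w : List α) :
    Metric.ediam {x : ℕ → α | (List.range n).map x = w} ≤ ENNReal.ofReal ((1 / 2) ^ n) := by
  refine Metric.ediam_le fun x hx y hy => ?_
  have hxy : x ∈ PiNat.cylinder y n := fun i hi =>
    List.map_inj_left.1 (hx.trans hy.symm) i (List.mem_range.2 hi)
  rw [edist_dist]
  exact ENNReal.ofReal_le_ofReal (PiNat.mem_cylinder_iff_dist_le.1 hxy)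

theorem ofReal_pow_rpow {x : ℝ} (hx : 0 < x) (n : ℕ) (d : ℝ) :
    ENNReal.ofReal (x ^ n) ^ d = ENNReal.ofReal ((x ^ d) ^ n) := by
  rw [ENNReal.ofReal_rpow_of_pos (pow_pos hx n), ← Real.rpow_natCast, ← Real.rpow_natCast,
    ← Real.rpow_mul hx.le, ← Real.rpow_mul hx.le, mul_comm]

theorem hausdorffMeasure_eq_zero_of_ncard_prefixWords_le {s : Set (ℕ → A)} {C p : ℕ}
    (hs : ∀ᶠ n in atTop, (prefixWords s n).ncard ≤ C * n ^ p) {d : ℝ} (hd : 0 < d) :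
    μH[d] s = 0 := by
  have := fun n => (finite_prefixWords s n).fintype
  set r : ℕ → ℝ≥0∞ := fun n => ENNReal.ofReal ((1 / 2) ^ n)
  set q : ℝ := (1 / 2) ^ d
  have hr : Tendsto r atTop (𝓝 0) := by
    simpa only [ENNReal.ofReal_zero] using ENNReal.tendsto_ofReal
      (tendsto_pow_atTop_nhds_zero_of_lt_one (by norm_num) (by norm_num : (1 / 2 : ℝ) < 1))
  let t : ∀ n, prefixWords s n → Set (ℕ → A) := fun n w => {x | (List.range n).map x = w}
  have hcover : ∀ n, s ⊆ ⋃ w, t n w := fun n x hx =>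
    Set.mem_iUnion.2 ⟨⟨_, x, hx, rfl⟩, rfl⟩
  have hsum : ∀ᶠ n in atTop,
      ∑ w, Metric.ediam (t n w) ^ d ≤ ENNReal.ofReal (C * ((n : ℝ) ^ p * q ^ n)) := by
    filter_upwards [hs] with n hn
    calc ∑ w, Metric.ediam (t n w) ^ d ≤ ∑ _w : prefixWords s n, r n ^ d := by
          gcongr with w
          exact ediam_setOf_map_range_eq_le n w.1
      _ = ((prefixWords s n).ncard : ℝ≥0∞) * ENNReal.ofReal (q ^ n) := by
          rw [Finset.sum_const, Finset.card_univ, nsmul_eq_mul, ofReal_pow_rpow one_half_pos,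
            ← Nat.card_eq_fintype_card, Nat.card_coe_set_eq]
      _ ≤ ((C * n ^ p : ℕ) : ℝ≥0∞) * ENNReal.ofReal (q ^ n) := by gcongr
      _ = ENNReal.ofReal (C * ((n : ℝ) ^ p * q ^ n)) := by
          rw [← ENNReal.ofReal_natCast, ← ENNReal.ofReal_mul (by positivity)]
          push_cast
          ring_nf
  have hlim : Tendsto (fun n : ℕ => ENNReal.ofReal (C * ((n : ℝ) ^ p * q ^ n))) atTop (𝓝 0) := by
    simpa using ENNReal.tendsto_ofReal ((tendsto_pow_const_mul_const_pow_of_lt_one p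
      (by positivity) (Real.rpow_lt_one (by norm_num) (by norm_num) hd)).const_mul (C : ℝ))
  refine le_antisymm ?_ zero_le
  calc μH[d] s ≤ liminf (fun n => ∑ w, Metric.ediam (t n w) ^ d) atTop :=
        Measure.hausdorffMeasure_le_liminf_sum d s r hr t
          (Eventually.of_forall fun n w => ediam_setOf_map_range_eq_le n w.1)
          (Eventually.of_forall hcover)
    _ ≤ liminf (fun n : ℕ => ENNReal.ofReal (C * ((n : ℝ) ^ p * q ^ n))) atTop :=
        liminf_le_liminf hsum
    _ = 0 := hlim.liminf_eq

theorem dimH_eq_zero_of_ncard_prefixWords_le {s : Set (ℕ → A)} {C p : ℕ}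
    (hs : ∀ᶠ n in atTop, (prefixWords s n).ncard ≤ C * n ^ p) : dimH s = 0 := by
  refine le_antisymm (dimH_le fun d hd => ?_) zero_le
  by_contra! hpos
  have : μH[(d : ℝ)] s = 0 :=
    hausdorffMeasure_eq_zero_of_ncard_prefixWords_le hs (by exact_mod_cast hpos)
  simp [this] at hd

end Dimension

theorem stmt_9_general (hA : 2 ≤ Fintype.card A)
    (θ : A → List A) (hprim : IsPrimitiveSubst θ) :
    dimH {x : ℕ → A | ∀ i n : ℕ, 1 ≤ n →
        ((List.range n).map fun j => x (i + j)) ∈ substLang θ} = 0 := by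
  obtain ⟨C, p, hcount⟩ := exists_ncard_substLang_length_le_pow hA hprim
  refine dimH_eq_zero_of_ncard_prefixWords_le
    (eventually_atTop.2 ⟨1, fun n hn => le_trans ?_ (hcount n hn)⟩)
  refine Set.ncard_le_ncard ?_ ((List.finite_length_eq A n).subset fun _ hw => hw.2)
  rintro _ ⟨x, hx, rfl⟩
  exact ⟨by simpa using hx 0 n hn, by simp⟩

/-- The one-sided substitution subshift `X_θ⁺` of a primitive substitution on a finite
alphabet with at least two letters has Hausdorff dimension `0` for the PiNat metric. -/
theorem stmt_9 (hA : 2 ≤ Fintype.card A)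
    (θ : A → List A) (hsub : IsSubstitution θ) (hprim : IsPrimitiveSubst θ) :
    dimH {x : ℕ → A | ∀ i n : ℕ, 1 ≤ n →
        ((List.range n).map fun j => x (i + j)) ∈ substLang θ} = 0 :=
  stmt_9_general hA θ hprim
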